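/- A quasi cone metric space (X,d) is forward compact if and only if X is forward totally bounded and forward complete. -/
import Mathlib


open TopologicalSpace

/-- A quasi cone metric space on `X` with values in a real Banach space `E`,
ordered by a cone `P` with nonempty interior. -/
structure QCMS (X : Type*) (E : Type*) [NormedAddCommGroup E] [NormedSpace ℝ E] : Type _ where
  P : Set E
  P_closed : IsClosed P
  P_ne : P ≠ {0}
  P_nonempty : P.Nonempty
  P_smul_add : ∀ ⦃x⦄, x ∈ P → ∀ ⦃y⦄, y ∈ P → ∀ s t : ℝ, 0 ≤ s → 0 ≤ t → s • x + t • y ∈ P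
  P_eq_zero : ∀ x, x ∈ P → -x ∈ P → x = 0
  P_int : (interior P).Nonempty
  d : X → X → E
  d_mem : ∀ x y, d x y ∈ P
  d_eq_zero_iff : ∀ x y, d x y = 0 ↔ x = y
  triangle : ∀ x y z, d x z + d z y - d x y ∈ P

namespace QCMS

variable {X E : Type*} [NormedAddCommGroup E] [NormedSpace ℝ E]

/-- `a ≪ b` : `b - a` lies in the interior of the cone. -/
def lt' (Q : QCMS X E) (a b : E) : Prop := b - a ∈ interior Q.P

/-- Forward open ball. -/
def ballF (Q : QCMS X E) (x : X) (u : E) : Set X := {y | Q.lt' (Q.d x y) u}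

/-- Backward open ball. -/
def ballB (Q : QCMS X E) (x : X) (u : E) : Set X := {y | Q.lt' (Q.d y x) u}

/-- The forward topology, generated by forward open balls. -/
def Tf (Q : QCMS X E) : TopologicalSpace X :=
  generateFrom {s | ∃ x u, u ∈ interior Q.P ∧ s = Q.ballF x u}

/-- The backward topology, generated by backward open balls. -/
def Tb (Q : QCMS X E) : TopologicalSpace X :=
  generateFrom {s | ∃ x u, u ∈ interior Q.P ∧ s = Q.ballB x u}

/-- Forward convergence of a sequence. -/
def FConv (Q : QCMS X E) (x : ℕ → X) (a : X) : Prop :=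
  ∀ u ∈ interior Q.P, ∃ N, ∀ n ≥ N, Q.lt' (Q.d a (x n)) u

/-- Backward convergence of a sequence. -/
def BConv (Q : QCMS X E) (x : ℕ → X) (a : X) : Prop :=
  ∀ u ∈ interior Q.P, ∃ N, ∀ n ≥ N, Q.lt' (Q.d (x n) a) u

/-- Forward Cauchy sequence. -/
def FCauchy (Q : QCMS X E) (x : ℕ → X) : Prop :=
  ∀ u ∈ interior Q.P, ∃ N, ∀ m n, N ≤ m → m ≤ n → Q.lt' (Q.d (x m) (x n)) u

/-- Forward sequential compactness of the whole space. -/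
def FSeqCompact (Q : QCMS X E) : Prop :=
  ∀ x : ℕ → X, ∃ (a : X) (φ : ℕ → ℕ), StrictMono φ ∧ Q.FConv (x ∘ φ) a

/-- Forward total boundedness of the whole space. -/
def FTotallyBounded (Q : QCMS X E) : Prop :=
  ∀ u ∈ interior Q.P, ∃ t : Finset X, ∀ y : X, ∃ c ∈ t, y ∈ Q.ballF c u

/-- Forward completeness. -/
def FComplete (Q : QCMS X E) : Prop :=
  ∀ x : ℕ → X, Q.FCauchy x → ∃ a, Q.FConv x a

end QCMS

/-! ### Auxiliary lemmas -/

namespace QCMS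

variable {X E : Type*} [NormedAddCommGroup E] [NormedSpace ℝ E] (Q : QCMS X E)

lemma zero_mem' : (0 : E) ∈ Q.P := by
  obtain ⟨x, hx⟩ := Q.P_nonempty
  simpa using Q.P_smul_add hx hx 0 0 le_rfl le_rfl

lemma add_mem' {a b : E} (ha : a ∈ Q.P) (hb : b ∈ Q.P) : a + b ∈ Q.P := by
  simpa using Q.P_smul_add ha hb 1 1 zero_le_one zero_le_one

lemma smul_mem' {a : E} (ha : a ∈ Q.P) {t : ℝ} (ht : 0 ≤ t) : t • a ∈ Q.P := by
  simpa using Q.P_smul_add ha ha t 0 ht le_rfl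

lemma int_add_mem {a b : E} (ha : a ∈ interior Q.P) (hb : b ∈ Q.P) :
    a + b ∈ interior Q.P := by
  have h1 : (fun z => z + b) '' interior Q.P ⊆ Q.P := by
    rintro _ ⟨z, hz, rfl⟩
    exact Q.add_mem' (interior_subset hz) hb
  have h2 : IsOpen ((fun z => z + b) '' interior Q.P) :=
    (Homeomorph.addRight b).isOpenMap _ isOpen_interior
  exact interior_maximal h1 h2 ⟨a, ha, rfl⟩

lemma int_add_int {a b : E} (ha : a ∈ interior Q.P) (hb : b ∈ interior Q.P) :
    a + b ∈ interior Q.P :=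
  Q.int_add_mem ha (interior_subset hb)

lemma smul_int {t : ℝ} (ht : 0 < t) {a : E} (ha : a ∈ interior Q.P) :
    t • a ∈ interior Q.P := by
  have himg : (fun z : E => t • z) '' interior Q.P = (fun z : E => t⁻¹ • z) ⁻¹' interior Q.P := by
    ext z
    constructor
    · rintro ⟨w, hw, rfl⟩
      simpa [smul_smul, inv_mul_cancel₀ ht.ne'] using hw
    · intro hz
      exact ⟨t⁻¹ • z, hz, by simp [smul_smul, mul_inv_cancel₀ ht.ne']⟩
  have h2 : IsOpen ((fun z : E => t • z) '' interior Q.P) := by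
    rw [himg]
    exact isOpen_interior.preimage (continuous_const_smul _)
  have h1 : (fun z : E => t • z) '' interior Q.P ⊆ Q.P := by
    rintro _ ⟨z, hz, rfl⟩
    exact Q.smul_mem' (interior_subset hz) ht.le
  exact interior_maximal h1 h2 ⟨a, ha, rfl⟩

lemma d_self (x : X) : Q.d x x = 0 := (Q.d_eq_zero_iff x x).2 rfl

lemma exists_pow_small (e : E) {b : E} (hb : b ∈ interior Q.P) :
    ∃ n : ℕ, b - ((1/2 : ℝ) ^ n) • e ∈ interior Q.P := by
  have h0 : Filter.Tendsto (fun n : ℕ => ((1/2 : ℝ) ^ n)) Filter.atTop (nhds 0) :=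
    tendsto_pow_atTop_nhds_zero_of_lt_one (by norm_num) (by norm_num)
  have h1 : Filter.Tendsto (fun n : ℕ => ((1/2 : ℝ) ^ n) • e) Filter.atTop (nhds 0) := by
    simpa using h0.smul_const e
  have h2 : Filter.Tendsto (fun n : ℕ => b - ((1/2 : ℝ) ^ n) • e) Filter.atTop (nhds b) := by
    simpa using tendsto_const_nhds.sub h1
  exact (h2.eventually (isOpen_interior.mem_nhds hb)).exists

lemma exists_common_radius {u v : E} (hu : u ∈ interior Q.P) (hv : v ∈ interior Q.P) :
    ∃ w ∈ interior Q.P, u - w ∈ interior Q.P ∧ v - w ∈ interior Q.P := by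
  obtain ⟨n1, h1⟩ := Q.exists_pow_small u hu
  obtain ⟨n2, h2⟩ := Q.exists_pow_small u hv
  set n := max n1 n2 with hn
  have key : ∀ b : E, ∀ m, m ≤ n → b - ((1/2 : ℝ) ^ m) • u ∈ interior Q.P →
      b - ((1/2 : ℝ) ^ n) • u ∈ interior Q.P := by
    intro b m hm hbm
    have hsc : (0 : ℝ) ≤ (1/2 : ℝ) ^ m - (1/2 : ℝ) ^ n := by
      have := pow_le_pow_of_le_one (by norm_num : (0:ℝ) ≤ 1/2) (by norm_num) hm
      linarith
    have heq : b - ((1/2 : ℝ) ^ n) • u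
        = (b - ((1/2 : ℝ) ^ m) • u) + (((1/2 : ℝ) ^ m - (1/2 : ℝ) ^ n) • u) := by
      rw [sub_smul]; abel
    rw [heq]
    exact Q.int_add_mem hbm (Q.smul_mem' (interior_subset hu) hsc)
  refine ⟨((1/2 : ℝ) ^ n) • u, Q.smul_int (by positivity) hu, ?_, ?_⟩
  · exact key u n1 (le_max_left _ _) h1
  · exact key v n2 (le_max_right _ _) h2

lemma isOpen_ballF {x : X} {u : E} (hu : u ∈ interior Q.P) :
    Q.Tf.IsOpen (Q.ballF x u) :=
  TopologicalSpace.GenerateOpen.basic _ ⟨x, u, hu, rfl⟩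

lemma mem_ballF_self {x : X} {u : E} (hu : u ∈ interior Q.P) : x ∈ Q.ballF x u := by
  show u - Q.d x x ∈ interior Q.P
  rw [Q.d_self]
  simpa using hu

lemma ballF_subset {x y : X} {u : E} (hyx : y ∈ Q.ballF x u) :
    Q.ballF y (u - Q.d x y) ⊆ Q.ballF x u := by
  intro z hz
  show u - Q.d x z ∈ interior Q.P
  have tri := Q.triangle x z y
  have hz' : (u - Q.d x y) - Q.d y z ∈ interior Q.P := hz
  have heq : u - Q.d x z
      = ((u - Q.d x y) - Q.d y z) + (Q.d x y + Q.d y z - Q.d x z) := by abel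
  rw [heq]
  exact Q.int_add_mem hz' tri

lemma ballF_mono {x : X} {w u : E} (h : u - w ∈ interior Q.P) :
    Q.ballF x w ⊆ Q.ballF x u := by
  intro z hz
  show u - Q.d x z ∈ interior Q.P
  have hz' : w - Q.d x z ∈ interior Q.P := hz
  have heq : u - Q.d x z = (u - w) + (w - Q.d x z) := by abel
  rw [heq]
  exact Q.int_add_int h hz'

lemma exists_ball_subset {s : Set X} (hs : Q.Tf.IsOpen s) :
    ∀ x ∈ s, ∃ u ∈ interior Q.P, Q.ballF x u ⊆ s := by
  obtain ⟨c0, hc0⟩ := Q.P_int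
  have hs' : TopologicalSpace.GenerateOpen
      {s | ∃ x u, u ∈ interior Q.P ∧ s = Q.ballF x u} s := hs
  clear hs
  induction hs' with
  | basic t ht =>
    obtain ⟨y, u, hu, rfl⟩ := ht
    intro x hx
    exact ⟨u - Q.d y x, hx, Q.ballF_subset hx⟩
  | univ => exact fun x _ => ⟨c0, hc0, Set.subset_univ _⟩
  | inter s t _ _ ihs iht =>
    intro x hx
    obtain ⟨u, hu, hsu⟩ := ihs x hx.1
    obtain ⟨v, hv, hsv⟩ := iht x hx.2
    obtain ⟨w, hw, hwu, hwv⟩ := Q.exists_common_radius hu hv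
    exact ⟨w, hw, Set.subset_inter
      ((Q.ballF_mono hwu).trans hsu) ((Q.ballF_mono hwv).trans hsv)⟩
  | sUnion S _ ih =>
    intro x hx
    obtain ⟨t, htS, hxt⟩ := hx
    obtain ⟨u, hu, hsub⟩ := ih t htS x hxt
    exact ⟨u, hu, hsub.trans (Set.subset_sUnion_of_mem htS)⟩

lemma mem_nhds_iff' {x : X} {s : Set X} :
    s ∈ @nhds X Q.Tf x ↔ ∃ u ∈ interior Q.P, Q.ballF x u ⊆ s := by
  letI := Q.Tf
  rw [_root_.mem_nhds_iff]
  constructor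
  · rintro ⟨t, hts, hto, hxt⟩
    obtain ⟨u, hu, hb⟩ := Q.exists_ball_subset hto x hxt
    exact ⟨u, hu, hb.trans hts⟩
  · rintro ⟨u, hu, hb⟩
    exact ⟨_, hb, Q.isOpen_ballF hu, Q.mem_ballF_self hu⟩

end QCMS

/-! ### König's lemma -/

namespace QCMSKonig

variable {α : Type*}

/-- iterated descent: from level `k + m` down to level `k`. -/
def kdown (p : ℕ → α → α) : ℕ → ℕ → α → α
  | _, 0 => fun x => x
  | k, (m+1) => fun x => kdown p k m (p (k+m) x)

lemma kdown_mem (p : ℕ → α → α) (T : ℕ → Finset α)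
    (hp : ∀ k x, x ∈ T (k+1) → p k x ∈ T k) :
    ∀ m k x, x ∈ T (k+m) → kdown p k m x ∈ T k
  | 0, k, x, h => h
  | (m+1), k, x, h => by
    have h' : x ∈ T ((k+m)+1) := h
    exact kdown_mem p T hp m k _ (hp (k+m) x h')

lemma kdown_comp (p : ℕ → α → α) :
    ∀ b a k x, kdown p k (a+b) x = kdown p k a (kdown p (k+a) b x)
  | 0, a, k, x => rfl
  | (b+1), a, k, x => by
    show kdown p k ((a+b)+1) x = kdown p k a (kdown p (k+a) (b+1) x)
    have h1 : kdown p k ((a+b)+1) x = kdown p k (a+b) (p (k+(a+b)) x) := rfl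
    have h2 : kdown p (k+a) (b+1) x = kdown p (k+a) b (p ((k+a)+b) x) := rfl
    rw [h1, h2, kdown_comp p b a k (p (k+(a+b)) x), add_assoc]

theorem koenig (T : ℕ → Finset α) (R : ℕ → α → α → Prop)
    (hne : ∀ k, (T k).Nonempty)
    (hstep : ∀ k, ∀ c' ∈ T (k+1), ∃ c ∈ T k, R k c c') :
    ∃ c : ℕ → α, (∀ k, c k ∈ T k) ∧ (∀ k, R k (c k) (c (k+1))) := by
  classical
  have hstep' : ∀ k c', ∃ c, (c' ∈ T (k+1) → c ∈ T k ∧ R k c c') := by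
    intro k c'
    by_cases h : c' ∈ T (k+1)
    · obtain ⟨c, hc, hr⟩ := hstep k c' h
      exact ⟨c, fun _ => ⟨hc, hr⟩⟩
    · exact ⟨(hne k).choose, fun h' => absurd h' h⟩
  choose p hp using hstep'
  have hpmem : ∀ k x, x ∈ T (k+1) → p k x ∈ T k := fun k x h => (hp k x h).1
  set alive : ℕ → α → Prop := fun k x => ∀ m, ∃ y, y ∈ T (k+m) ∧ kdown p k m y = x with halive
  have alive_mem : ∀ k x, alive k x → x ∈ T k := by
    intro k x hx
    obtain ⟨y, hy, hy2⟩ := hx 0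
    have : y = x := hy2
    rw [← this]
    simpa using hy
  -- alive at level 0
  have a0 : ∃ x, alive 0 x := by
    by_contra hcon
    push_neg at hcon
    simp only [halive] at hcon
    push_neg at hcon
    choose f hf using hcon
    set M := (T 0).sup f with hM
    obtain ⟨y0, hy0⟩ := hne M
    have hy0' : y0 ∈ T (0 + M) := by simpa using hy0
    set x := kdown p 0 M y0 with hx
    have hxT : x ∈ T 0 := kdown_mem p T hpmem M 0 y0 hy0'
    have hfx : f x ≤ M := Finset.le_sup hxT
    -- witness at depth f x
    have hcompose : kdown p 0 M y0 = kdown p 0 (f x) (kdown p (0 + f x) (M - f x) y0) := by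
      have h := kdown_comp p (M - f x) (f x) 0 y0
      rw [show f x + (M - f x) = M by omega] at h
      exact h
    have hymem : kdown p (0 + f x) (M - f x) y0 ∈ T (0 + f x) := by
      apply kdown_mem p T hpmem
      have : (0 + f x) + (M - f x) = 0 + M := by omega
      rw [this]
      exact hy0'
    exact hf x (kdown p (0 + f x) (M - f x) y0) hymem hcompose.symm
  -- alive step
  have astep : ∀ k x, alive k x → ∃ x', alive (k+1) x' ∧ p k x' = x := by
    intro k x hx
    by_contra hcon
    push_neg at hcon
    have hcon' : ∀ x', p k x' = x → ∃ m, ∀ y, y ∈ T ((k+1)+m) → kdown p (k+1) m y ≠ x' := by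
      intro x' hpx'
      rcases Classical.em (alive (k+1) x') with h | h
      · exact absurd hpx' (hcon x' h)
      · simp only [halive] at h
        push_neg at h
        exact h
    classical
    choose g hg using hcon'
    set C := (T (k+1)).filter (fun y => p k y = x) with hC
    set M := C.sup (fun y => if h : p k y = x then g y h else 0) with hM
    obtain ⟨y, hyT, hyd⟩ := hx (M + 1)
    have hyT' : y ∈ T ((k+1) + M) := by
      have : k + (M+1) = (k+1) + M := by omega
      rwa [this] at hyT
    set z := kdown p (k+1) M y with hz
    have hzT : z ∈ T (k+1) := kdown_mem p T hpmem M (k+1) y hyT'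
    have hpz : p k z = x := by
      have h1 : kdown p k (M+1) y = kdown p k (1 + M) y := by rw [Nat.add_comm]
      have h2 : kdown p k (1 + M) y = kdown p k 1 (kdown p (k+1) M y) := kdown_comp p M 1 k y
      have h3 : kdown p k 1 (kdown p (k+1) M y) = p k z := rfl
      rw [h1, h2, h3] at hyd
      exact hyd
    have hzC : z ∈ C := by
      rw [hC, Finset.mem_filter]
      exact ⟨hzT, hpz⟩
    have hgz : g z hpz ≤ M := by
      have := Finset.le_sup (f := fun y => if h : p k y = x then g y h else 0) hzC
      simpa [hpz] using this
    -- witness for alive (k+1) z at depth g z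
    set m0 := g z hpz with hm0
    have hcompose : kdown p (k+1) M y
        = kdown p (k+1) m0 (kdown p ((k+1) + m0) (M - m0) y) := by
      have h := kdown_comp p (M - m0) m0 (k+1) y
      rw [show m0 + (M - m0) = M by omega] at h
      exact h
    have hymem : kdown p ((k+1) + m0) (M - m0) y ∈ T ((k+1) + m0) := by
      apply kdown_mem p T hpmem
      have : ((k+1) + m0) + (M - m0) = (k+1) + M := by omega
      rw [this]
      exact hyT'
    exact hg z hpz (kdown p ((k+1)+m0) (M - m0) y) hymem (by rw [← hcompose, ← hz])
  -- build the branch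
  obtain ⟨x0, hx0⟩ := a0
  let seq : ∀ _ : ℕ, {x : α // alive _ x} := fun k =>
    Nat.rec (motive := fun k => {x : α // alive k x}) ⟨x0, hx0⟩
      (fun k ih => ⟨(astep k ih.1 ih.2).choose, (astep k ih.1 ih.2).choose_spec.1⟩) k
  refine ⟨fun k => (seq k).1, fun k => alive_mem k _ (seq k).2, fun k => ?_⟩
  have hspec := (astep k (seq k).1 (seq k).2).choose_spec
  have hmem1 : (astep k (seq k).1 (seq k).2).choose ∈ T (k+1) :=
    alive_mem (k+1) _ hspec.1
  have hR := (hp k _ hmem1).2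
  rw [hspec.2] at hR
  show R k (seq k).1 (seq (k+1)).1
  exact hR

end QCMSKonig

/-- forward compact ↔ forward totally bounded and forward complete. -/
theorem forward_compact_iff {X E : Type*} [NormedAddCommGroup E] [NormedSpace ℝ E]
    (Q : QCMS X E) :
    @CompactSpace X Q.Tf ↔ Q.FTotallyBounded ∧ Q.FComplete := by
  classical
  obtain ⟨c0, hc0⟩ := Q.P_int
  constructor
  · intro hcomp
    letI := Q.Tf
    constructor
    · -- totally bounded
      intro u hu
      have hcover : (Set.univ : Set X) ⊆ ⋃ c : X, Q.ballF c u := fun y _ =>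
        Set.mem_iUnion.2 ⟨y, Q.mem_ballF_self hu⟩
      obtain ⟨t, ht⟩ := isCompact_univ.elim_finite_subcover
        (fun c : X => Q.ballF c u) (fun c => Q.isOpen_ballF hu) hcover
      refine ⟨t, fun y => ?_⟩
      have := ht (Set.mem_univ y)
      simpa using this
    · -- complete
      intro x hx
      have hnb : (Filter.map x Filter.atTop).NeBot := Filter.map_neBot
      set F := @Ultrafilter.of X (Filter.map x Filter.atTop) hnb with hF
      obtain ⟨a, -, ha⟩ := isCompact_univ.ultrafilter_le_nhds F
        (by simpa using Filter.le_principal_iff.2 Filter.univ_mem)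
      refine ⟨a, ?_⟩
      intro u hu
      have hw : ((1/2 : ℝ)) • u ∈ interior Q.P := Q.smul_int (by norm_num) hu
      set w := ((1/2 : ℝ)) • u with hwdef
      obtain ⟨N, hN⟩ := hx w hw
      have hball : Q.ballF a w ∈ F := by
        have hbo : IsOpen (Q.ballF a w) := Q.isOpen_ballF hw
        exact ha (hbo.mem_nhds (Q.mem_ballF_self hw))
      have htail : x '' Set.Ici N ∈ F := by
        apply (Ultrafilter.of_le (Filter.map x Filter.atTop))
        exact Filter.image_mem_map (Filter.mem_atTop N)
      obtain ⟨z, hz1, hz2⟩ := Filter.nonempty_of_mem (Filter.inter_mem hball htail)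
      obtain ⟨m, hm, rfl⟩ := hz2
      refine ⟨m, fun n hn => ?_⟩
      have h1 : w - Q.d a (x m) ∈ interior Q.P := hz1
      have h2 : w - Q.d (x m) (x n) ∈ interior Q.P := hN m n hm hn
      show u - Q.d a (x n) ∈ interior Q.P
      have tri := Q.triangle a (x n) (x m)
      have h2w : w + w = u := by rw [hwdef, ← add_smul]; norm_num
      have heq : u - Q.d a (x n) = ((w - Q.d a (x m)) + (w - Q.d (x m) (x n)))
          + (Q.d a (x m) + Q.d (x m) (x n) - Q.d a (x n)) := by
        rw [← h2w]; abel
      rw [heq]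
      exact Q.int_add_mem (Q.int_add_int h1 h2) tri
  · rintro ⟨htb, hcpl⟩
    letI := Q.Tf
    refine ⟨isCompact_iff_ultrafilter_le_nhds.2 fun F _ => ?_⟩
    -- scales
    set u : ℕ → E := fun k => ((1/2 : ℝ) ^ k) • c0 with hudef
    set v : ℕ → E := fun k => ((2 : ℝ) * (1/2 : ℝ) ^ k) • c0 with hvdef
    have hu_int : ∀ k, u k ∈ interior Q.P := fun k => Q.smul_int (by positivity) hc0
    have hv_int : ∀ k, v k ∈ interior Q.P := fun k => Q.smul_int (by positivity) hc0
    have hvv : ∀ k, v k = u k + v (k+1) := by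
      intro k
      rw [hudef, hvdef, ← add_smul]
      congr 1
      ring
    have hvu : ∀ k, v k - u k = u k := by
      intro k
      rw [hudef, hvdef, ← sub_smul]
      congr 1
      ring
    have hvP : ∀ k m, k ≤ m → v k - v m ∈ Q.P := by
      intro k m hkm
      rw [hvdef, ← sub_smul]
      refine Q.smul_mem' (interior_subset hc0) ?_
      have := pow_le_pow_of_le_one (by norm_num : (0:ℝ) ≤ 1/2) (by norm_num) hkm
      nlinarith
    have hvsmall : ∀ b : E, b ∈ interior Q.P → ∃ k, b - v k ∈ interior Q.P := by
      intro b hb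
      obtain ⟨n, hn⟩ := Q.exists_pow_small ((2 : ℝ) • c0) hb
      refine ⟨n, ?_⟩
      have : ((1/2 : ℝ) ^ n) • ((2 : ℝ) • c0) = v n := by
        rw [smul_smul, hvdef]
        congr 1
        ring
      rwa [this] at hn
    -- covering finsets
    have hC : ∀ k : ℕ, ∃ C : Finset X, ∀ y, ∃ c ∈ C, y ∈ Q.ballF c (u k) :=
      fun k => htb (u k) (hu_int k)
    choose C hCc using hC
    set T : ℕ → Finset X := fun k => (C k).filter (fun c => Q.ballF c (v k) ∈ F) with hT
    have hTmem : ∀ k c, c ∈ T k → Q.ballF c (v k) ∈ F := by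
      intro k c hcm
      exact (Finset.mem_filter.1 hcm).2
    have hTne : ∀ k, (T k).Nonempty := by
      intro k
      have hunion : (⋃ c ∈ C k, Q.ballF c (u k)) ∈ F := by
        apply Filter.mem_of_superset Filter.univ_mem
        intro y _
        obtain ⟨c, hcC, hcy⟩ := hCc k y
        exact Set.mem_biUnion hcC hcy
      obtain ⟨c, hcC, hcb⟩ := (Ultrafilter.finite_biUnion_mem_iff (C k).finite_toSet).1 hunion
      refine ⟨c, Finset.mem_filter.2 ⟨hcC, ?_⟩⟩
      exact Filter.mem_of_superset hcb (Q.ballF_mono (by rw [hvu k]; exact hu_int k))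
    have hstep : ∀ k, ∀ c' ∈ T (k+1), ∃ c ∈ T k, Q.lt' (Q.d c c') (u k) := by
      intro k c' hc'
      obtain ⟨c, hcC, hcc'⟩ := hCc k c'
      have hcc'' : u k - Q.d c c' ∈ interior Q.P := hcc'
      refine ⟨c, ?_, hcc'⟩
      refine Finset.mem_filter.2 ⟨hcC, ?_⟩
      apply Filter.mem_of_superset (hTmem (k+1) c' hc')
      intro z hz
      have hz' : v (k+1) - Q.d c' z ∈ interior Q.P := hz
      show v k - Q.d c z ∈ interior Q.P
      have tri := Q.triangle c z c'
      have heq : v k - Q.d c z = ((u k - Q.d c c') + (v (k+1) - Q.d c' z))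
          + (Q.d c c' + Q.d c' z - Q.d c z) := by
        rw [hvv k]; abel
      rw [heq]
      exact Q.int_add_mem (Q.int_add_int hcc'' hz') tri
    obtain ⟨c, hcT, hcR⟩ := QCMSKonig.koenig T (fun k a b => Q.lt' (Q.d a b) (u k)) hTne hstep
    -- the branch is forward Cauchy
    have hS : ∀ m j, (v m - v (m+1+j)) - Q.d (c m) (c (m+1+j)) ∈ interior Q.P := by
      intro m j
      induction j with
      | zero =>
        have h1 : v m - v (m+1) = u m := by rw [hvv m]; abel
        have h2 : u m - Q.d (c m) (c (m+1)) ∈ interior Q.P := hcR m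
        have heq : (v m - v (m+1+0)) - Q.d (c m) (c (m+1+0))
            = u m - Q.d (c m) (c (m+1)) := by
          norm_num [h1]
        rw [heq]
        exact h2
      | succ j ih =>
        set n := m+1+j with hn
        have hidx : m+1+(j+1) = n+1 := by omega
        rw [hidx]
        have tri := Q.triangle (c m) (c (n+1)) (c n)
        have e2 : u n - Q.d (c n) (c (n+1)) ∈ interior Q.P := hcR n
        have heq : (v m - v (n+1)) - Q.d (c m) (c (n+1))
            = (((v m - v n) - Q.d (c m) (c n)) + (u n - Q.d (c n) (c (n+1))))
              + (Q.d (c m) (c n) + Q.d (c n) (c (n+1)) - Q.d (c m) (c (n+1))) := by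
          rw [hvv n]; abel
        rw [heq]
        exact Q.int_add_mem (Q.int_add_int ih e2) tri
    have hcauchy : Q.FCauchy c := by
      intro w hw
      obtain ⟨k0, hk0⟩ := hvsmall w hw
      refine ⟨k0, fun m n hm hmn => ?_⟩
      rcases eq_or_lt_of_le hmn with rfl | hlt
      · show w - Q.d (c m) (c m) ∈ interior Q.P
        rw [Q.d_self]
        simpa using hw
      · obtain ⟨j, rfl⟩ : ∃ j, n = m+1+j := ⟨n - (m+1), by omega⟩
        have hs := hS m j
        show w - Q.d (c m) (c (m+1+j)) ∈ interior Q.P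
        have heq : w - Q.d (c m) (c (m+1+j))
            = (((w - v k0) + (v k0 - v m)) + ((v m - v (m+1+j)) - Q.d (c m) (c (m+1+j))))
              + v (m+1+j) := by abel
        rw [heq]
        exact Q.int_add_mem
          (Q.int_add_int (Q.int_add_mem hk0 (hvP k0 m hm)) hs)
          (interior_subset (hv_int _))
    obtain ⟨t, ht⟩ := hcpl c hcauchy
    refine ⟨t, Set.mem_univ t, fun s hs => ?_⟩
    obtain ⟨u', hu', hsub⟩ := (Q.mem_nhds_iff').1 hs
    refine Filter.mem_of_superset ?_ hsub
    -- show ball t u' ∈ F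
    have hw : ((1/2 : ℝ)) • u' ∈ interior Q.P := Q.smul_int (by norm_num) hu'
    set w := ((1/2 : ℝ)) • u' with hwdef
    obtain ⟨k1, hk1⟩ := hvsmall w hw
    obtain ⟨N, hN⟩ := ht w hw
    set n := max N k1 with hnn
    have h1 : w - Q.d t (c n) ∈ interior Q.P := hN n (le_max_left _ _)
    have h2 : Q.ballF (c n) (v n) ∈ F := hTmem n (c n) (hcT n)
    apply Filter.mem_of_superset h2
    intro y hy
    have hy' : v n - Q.d (c n) y ∈ interior Q.P := hy
    show u' - Q.d t y ∈ interior Q.P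
    have tri := Q.triangle t y (c n)
    have h2w : w + w = u' := by rw [hwdef, ← add_smul]; norm_num
    have heq : u' - Q.d t y
        = ((((w - Q.d t (c n)) + (w - v k1)) + (v k1 - v n)) + (v n - Q.d (c n) y))
          + (Q.d t (c n) + Q.d (c n) y - Q.d t y) := by
      rw [← h2w]; abel
    rw [heq]
    exact Q.int_add_mem
      (Q.int_add_int (Q.int_add_mem (Q.int_add_int h1 hk1) (hvP k1 n (le_max_right _ _))) hy')
      tri
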